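/- arXiv:2406.11302 — 2 statements merged into one kernel-verified Lean document; each statement's English description precedes it below -/
import Mathlib

section
/- Let N be a square-free positive integer. Then for all integers a, b, the Kloosterman sum K(a, b, N) is nonzero. -/
open scoped BigOperators

/-- The Kloosterman sum `K(a,b,c) = ∑_{x mod c, gcd(x,c)=1} e((a x + b x̄)/c)`,
where `x̄` is the inverse of `x` modulo `c`. -/
noncomputable def kloosterman (a b : ℤ) (c : ℕ) : ℂ :=
  ∑ x ∈ (Finset.range c).filter (fun x => Nat.gcd x c = 1),
    Complex.exp (2 * Real.pi * Complex.I *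
      (((a * (x : ℤ) + b * ((((x : ZMod c)⁻¹ : ZMod c)).val : ℤ) : ℤ) : ℂ) / (c : ℂ)))

/-!
Over a finite field of characteristic `p`, every value of an additive character is a `p`-th root
of unity, so a Kloosterman sum is a sum of `q - 1` powers of a primitive `p`-th root of unity `ζ`.
If it vanished, `ζ` would be a root of `∑ X ^ kᵢ`, so `Φ_p` would divide this polynomial in `ℤ[X]`;
evaluating at `1` gives `p ∣ q - 1`, which is absurd since `p ∣ q`. For square-free `N` the Chinese
remainder theorem splits `ZMod N` into prime fields, and a Kloosterman sum over `R × S` factors,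
because an additive character of `R × S` is the product of its restrictions to `R` and `S`.
-/

open Finset Polynomial

theorem IsPrimitiveRoot.prime_dvd_card_of_sum_pow_eq_zero {ι K : Type*} [Field K] [CharZero K]
    {ζ : K} {p : ℕ} [hp : Fact p.Prime] (hζ : IsPrimitiveRoot ζ p) {s : Finset ι} (k : ι → ℕ)
    (h : ∑ i ∈ s, ζ ^ k i = 0) : p ∣ #s := by
  set A : ℤ[X] := ∑ i ∈ s, X ^ k i
  have hA : cyclotomic p ℤ ∣ A := by
    rw [cyclotomic_eq_minpoly hζ hp.out.pos]
    exact minpoly.isIntegrallyClosed_dvd (hζ.isIntegral hp.out.pos) (by simpa [A] using h)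
  have := eval_dvd (x := 1) hA
  rw [eval_one_cyclotomic_prime] at this
  exact_mod_cast (by simpa [A, eval_finsetSum] using this : (p : ℤ) ∣ #s)

theorem Complex.prime_dvd_card_of_sum_eq_zero_of_pow_eq_one {ι : Type*} {p : ℕ} [Fact p.Prime]
    {s : Finset ι} {f : ι → ℂ} (hf : ∀ i, f i ^ p = 1) (h : ∑ i ∈ s, f i = 0) : p ∣ #s := by
  have hζ := Complex.isPrimitiveRoot_exp p (NeZero.ne p)
  choose k _ hk using fun i ↦ hζ.eq_pow_of_pow_eq_one (hf i)
  refine hζ.prime_dvd_card_of_sum_pow_eq_zero k ?_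
  simpa only [hk] using h

noncomputable def kloostermanSum {R M : Type*} [CommRing R] [Fintype R] [DecidableEq R]
    [CommSemiring M] (ψ : AddChar R M) (a b : R) : M :=
  ∑ x : Rˣ, ψ (a * x + b * ↑x⁻¹)

section

variable {R S M : Type*} [CommRing R] [Fintype R] [DecidableEq R] [CommRing S] [Fintype S]
  [DecidableEq S] [CommSemiring M]

theorem kloostermanSum_ringEquiv (e : R ≃+* S) (ψ : AddChar R M) (a b : R) :
    kloostermanSum ψ a b =
      kloostermanSum (ψ.compAddMonoidHom e.symm.toAddMonoidHom) (e a) (e b) := by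
  refine Fintype.sum_equiv (Units.mapEquiv e.toMulEquiv).toEquiv _ _ fun x ↦ ?_
  simp [← map_inv]

theorem kloostermanSum_prod (ψ : AddChar (R × S) M) (a b : R × S) :
    kloostermanSum ψ a b =
      kloostermanSum (ψ.compAddMonoidHom (AddMonoidHom.inl R S)) a.1 b.1 *
        kloostermanSum (ψ.compAddMonoidHom (AddMonoidHom.inr R S)) a.2 b.2 := by
  rw [kloostermanSum, kloostermanSum, kloostermanSum, sum_mul_sum, ← Fintype.sum_prod_type']
  refine Fintype.sum_equiv MulEquiv.prodUnits.toEquiv _ _ fun x ↦ ?_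
  rw [AddChar.compAddMonoidHom_apply, AddChar.compAddMonoidHom_apply, ← AddChar.map_add_eq_mul]
  congr 1
  ext <;> simp [MulEquiv.prodUnits]

end

theorem FiniteField.kloostermanSum_ne_zero {F : Type*} [Field F] [Fintype F] [DecidableEq F]
    (ψ : AddChar F ℂ) (a b : F) : kloostermanSum ψ a b ≠ 0 := by
  obtain ⟨p, _, _, hp, hcard⟩ := FiniteField.card' F
  have : Fact p.Prime := ⟨hp⟩
  have hψ (y : F) : ψ y ^ p = 1 := by
    rw [← AddChar.map_nsmul_eq_pow, nsmul_eq_mul, CharP.cast_eq_zero, zero_mul,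
      AddChar.map_zero_eq_one]
  intro h
  have hunits : p ∣ Fintype.card F - 1 := Fintype.card_units (α := F) ▸
    Complex.prime_dvd_card_of_sum_eq_zero_of_pow_eq_one (fun _ ↦ hψ _) h
  have hF : p ∣ Fintype.card F := hcard ▸ dvd_pow_self p (PNat.ne_zero _)
  have := Nat.dvd_sub hF hunits
  rw [Nat.sub_sub_self Fintype.card_pos] at this
  exact hp.not_dvd_one this

theorem kloosterman_eq_kloostermanSum (a b : ℤ) (c : ℕ) [NeZero c] :
    kloosterman a b c = kloostermanSum ZMod.stdAddChar (a : ZMod c) (b : ZMod c) := by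
  have hcop {x : ℕ} (hx : x ∈ (range c).filter (Nat.gcd · c = 1)) : x.Coprime c :=
    (mem_filter.mp hx).2
  refine sum_bij' (fun x hx ↦ ZMod.unitOfCoprime x (hcop hx)) (fun u _ ↦ (u : ZMod c).val)
    (fun _ _ ↦ mem_univ _) (fun u _ ↦ ?_) (fun x hx ↦ ?_) (fun u _ ↦ ?_) (fun x hx ↦ ?_)
  · exact mem_filter.mpr ⟨mem_range.mpr (ZMod.val_lt _), ZMod.val_coe_unit_coprime u⟩
  · simp [ZMod.val_cast_of_lt (mem_range.mp (mem_filter.mp hx).1)]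
  · ext; simp
  · rw [← mul_div_assoc, ← ZMod.stdAddChar_coe]
    push_cast
    rw [ZMod.natCast_val, ZMod.cast_id', id, ← ZMod.inv_coe_unit, ZMod.coe_unitOfCoprime]

theorem ZMod.kloostermanSum_ne_zero_of_squarefree {N : ℕ} [NeZero N] (hN : Squarefree N)
    (ψ : AddChar (ZMod N) ℂ) (a b : ZMod N) : kloostermanSum ψ a b ≠ 0 := by
  -- `Fintype (ZMod N)` depends on `NeZero N`, so the instance has to vary along the induction.
  revert ‹NeZero N›
  induction N using Nat.recOnPosPrimePosCoprime with
  | zero => intro h; exact absurd rfl h.ne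
  | one =>
    intro _
    rw [kloostermanSum, Fintype.sum_unique, Subsingleton.elim (a * _ + _) 0,
      AddChar.map_zero_eq_one]
    exact one_ne_zero
  | prime_pow p n hp hn =>
    obtain rfl : n = 1 := ((Nat.squarefree_pow_iff hp.ne_one hn.ne').mp hN).2
    have : Fact (p ^ 1).Prime := ⟨by rwa [pow_one]⟩
    intro _
    exact FiniteField.kloostermanSum_ne_zero ψ a b
  | coprime m n _ _ hmn ihm ihn =>
    intro _
    obtain ⟨-, hm, hn⟩ := Nat.squarefree_mul_iff.mp hN
    have : NeZero m := ⟨hm.ne_zero⟩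
    have : NeZero n := ⟨hn.ne_zero⟩
    rw [kloostermanSum_ringEquiv (ZMod.chineseRemainder hmn), kloostermanSum_prod]
    exact mul_ne_zero (ihm hm _ _ _) (ihn hn _ _ _)

/-- For square-free `N`, the Kloosterman sum `K(a,b,N)` is nonzero for all integers `a, b`. -/
theorem kloosterman_ne_zero_of_squarefree (N : ℕ) (hN : Squarefree N) (a b : ℤ) :
    kloosterman a b N ≠ 0 := by
  have : NeZero N := ⟨hN.ne_zero⟩
  rw [kloosterman_eq_kloostermanSum]
  exact ZMod.kloostermanSum_ne_zero_of_squarefree hN _ _ _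
end

section
/- Let c₁, c₂ be positive integers with gcd(c₁, c₂) = 1, and let a, b be integers. Let d₂ be any integer with c₂ d₂ ≡ 1 (mod c₁) and d₁ any integer with c₁ d₁ ≡ 1 (mod c₂). Then K(a, b, c₁ c₂) = K(a d₂², b, c₁) · K(a d₁², b, c₂). -/
open scoped BigOperators

noncomputable def eC (t : ℂ) : ℂ := Complex.exp (2 * Real.pi * Complex.I * t)

lemma eC_add (s t : ℂ) : eC (s + t) = eC s * eC t := by
  simp [eC, mul_add, Complex.exp_add]

lemma eC_int (n : ℤ) : eC n = 1 := by
  rw [eC]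
  rw [show (2 * (Real.pi:ℂ) * Complex.I * n) = n * (2 * Real.pi * Complex.I) by ring]
  exact Complex.exp_int_mul_two_pi_mul_I n

lemma eC_div_congr {c : ℕ} (hc : c ≠ 0) {m n : ℤ} (h : m ≡ n [ZMOD (c:ℤ)]) :
    eC ((m : ℂ) / c) = eC ((n : ℂ) / c) := by
  obtain ⟨k, hk⟩ := h.symm.dvd
  have hcc : (c : ℂ) ≠ 0 := Nat.cast_ne_zero.mpr hc
  have : (m : ℂ) / c = (n : ℂ) / c + (k : ℤ) := by
    field_simp
    have : (m : ℂ) = n + c * k := by exact_mod_cast congrArg (Int.cast : ℤ → ℂ) (by linarith [hk])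
    rw [this]
  rw [this, eC_add, eC_int, mul_one]

lemma eC_split {c₁ c₂ : ℕ} (h₁ : c₁ ≠ 0) (h₂ : c₂ ≠ 0) (hco : Nat.Coprime c₁ c₂)
    {d₁ d₂ : ℤ} (hd₂ : Int.ModEq (c₁ : ℤ) ((c₂ : ℤ) * d₂) 1)
    (hd₁ : Int.ModEq (c₂ : ℤ) ((c₁ : ℤ) * d₁) 1) (m : ℤ) :
    eC ((m : ℂ) / (c₁ * c₂)) = eC (((m * d₂ : ℤ) : ℂ) / c₁) * eC (((m * d₁ : ℤ) : ℂ) / c₂) := by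
  have hA : (c₁ : ℤ) ∣ (1 - c₂ * d₂ - c₁ * d₁) :=
    dvd_sub (dvd_sub_comm.mp hd₂.symm.dvd) ⟨d₁, rfl⟩
  have hB : (c₂ : ℤ) ∣ (1 - c₂ * d₂ - c₁ * d₁) := by
    have h2 : (c₂:ℤ) ∣ (1 - c₁ * d₁ - c₂ * d₂) := dvd_sub (dvd_sub_comm.mp hd₁.symm.dvd) ⟨d₂, rfl⟩
    convert h2 using 1; ring
  have hAB : ((c₁ : ℤ) * c₂) ∣ (1 - c₂ * d₂ - c₁ * d₁) :=
    IsCoprime.mul_dvd (Int.isCoprime_iff_gcd_eq_one.mpr (by exact_mod_cast hco)) hA hB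
  obtain ⟨k, hk⟩ := hAB
  have hc1 : (c₁ : ℂ) ≠ 0 := Nat.cast_ne_zero.mpr h₁
  have hc2 : (c₂ : ℂ) ≠ 0 := Nat.cast_ne_zero.mpr h₂
  have key : (m : ℂ) / (c₁ * c₂) = ((m * d₂ : ℤ) : ℂ) / c₁ + ((m * d₁ : ℤ) : ℂ) / c₂ + ((m * k : ℤ) : ℂ) := by
    have h1 : (1 : ℂ) - c₂ * d₂ - c₁ * d₁ = (c₁ : ℂ) * c₂ * k := by exact_mod_cast congrArg (Int.cast : ℤ → ℂ) hk
    push_cast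
    field_simp
    linear_combination (m : ℂ) * h1
  rw [key, eC_add, eC_add, eC_int, mul_one]

lemma kloosterman_eq_sum_units (a b : ℤ) (c : ℕ) [NeZero c] :
    kloosterman a b c = ∑ u : (ZMod c)ˣ,
      eC (((a * (((u : ZMod c)).val : ℤ) + b * ((((u⁻¹ : (ZMod c)ˣ) : ZMod c)).val : ℤ) : ℤ) : ℂ) / c) := by
  rw [kloosterman]
  refine Finset.sum_bij' (fun x hx => ZMod.unitOfCoprime x (by
      simp only [Finset.mem_filter] at hx; exact hx.2))
    (fun u _ => ((u : ZMod c)).val) ?_ ?_ ?_ ?_ ?_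
  · intro x hx; exact Finset.mem_univ _
  · intro u _
    simp only [Finset.mem_filter, Finset.mem_range]
    exact ⟨ZMod.val_lt _, ZMod.val_coe_unit_coprime u⟩
  · intro x hx
    simp only [Finset.mem_filter, Finset.mem_range] at hx
    simp [ZMod.coe_unitOfCoprime, ZMod.val_cast_of_lt hx.1]
  · intro u _
    apply Units.ext
    simp [ZMod.coe_unitOfCoprime, ZMod.natCast_val, ZMod.cast_id]
  · intro x hx
    simp only [Finset.mem_filter, Finset.mem_range] at hx
    simp [eC, ← ZMod.inv_coe_unit, ZMod.coe_unitOfCoprime, ZMod.val_cast_of_lt hx.1]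

/-- Twisted multiplicativity, second form: if `gcd(c₁,c₂) = 1`, `c₂ d₂ ≡ 1 (mod c₁)` and
`c₁ d₁ ≡ 1 (mod c₂)`, then `K(a,b,c₁c₂) = K(a d₂², b, c₁) K(a d₁², b, c₂)`. -/
theorem kloosterman_twisted_mult_sq (c₁ c₂ : ℕ) (h₁ : 0 < c₁) (h₂ : 0 < c₂)
    (hco : Nat.Coprime c₁ c₂) (a b d₁ d₂ : ℤ)
    (hd₂ : Int.ModEq (c₁ : ℤ) ((c₂ : ℤ) * d₂) 1)
    (hd₁ : Int.ModEq (c₂ : ℤ) ((c₁ : ℤ) * d₁) 1) :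
    kloosterman a b (c₁ * c₂) =
      kloosterman (a * d₂ ^ 2) b c₁ * kloosterman (a * d₁ ^ 2) b c₂ := by
  haveI : NeZero c₁ := ⟨h₁.ne'⟩
  haveI : NeZero c₂ := ⟨h₂.ne'⟩
  haveI : NeZero (c₁ * c₂) := ⟨Nat.mul_ne_zero h₁.ne' h₂.ne'⟩
  rw [kloosterman_eq_sum_units, kloosterman_eq_sum_units, kloosterman_eq_sum_units]
  -- CRT-based multiplicative equivalence on units
  set crt : ZMod (c₁ * c₂) ≃+* ZMod c₁ × ZMod c₂ := ZMod.chineseRemainder hco with hcrt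
  set χ : (ZMod (c₁ * c₂))ˣ ≃* (ZMod c₁)ˣ × (ZMod c₂)ˣ :=
    (Units.mapEquiv crt.toMulEquiv).trans MulEquiv.prodUnits with hχ
  -- units w₁ = c₂ mod c₁ (inverse d₂), w₂ = c₁ mod c₂ (inverse d₁)
  have hu₁ : ((c₂ : ZMod c₁)) * ((d₂ : ℤ) : ZMod c₁) = 1 := by
    have := (ZMod.intCast_eq_intCast_iff _ _ _).mpr hd₂
    push_cast at this; exact_mod_cast this
  have hu₂ : ((c₁ : ZMod c₂)) * ((d₁ : ℤ) : ZMod c₂) = 1 := by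
    have := (ZMod.intCast_eq_intCast_iff _ _ _).mpr hd₁
    push_cast at this; exact_mod_cast this
  set w₁ : (ZMod c₁)ˣ := ⟨(c₂ : ZMod c₁), ((d₂ : ℤ) : ZMod c₁), hu₁, by rw [mul_comm]; exact hu₁⟩ with hw₁
  set w₂ : (ZMod c₂)ˣ := ⟨(c₁ : ZMod c₂), ((d₁ : ℤ) : ZMod c₂), hu₂, by rw [mul_comm]; exact hu₂⟩ with hw₂
  set Φ : (ZMod (c₁ * c₂))ˣ ≃ (ZMod c₁)ˣ × (ZMod c₂)ˣ :=
    χ.toEquiv.trans (Equiv.mulLeft (w₁, w₂)) with hΦ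
  -- reduction homs
  set r₁ : ZMod (c₁ * c₂) →+* ZMod c₁ := ZMod.castHom (Dvd.intro c₂ rfl) (ZMod c₁) with hr₁
  set r₂ : ZMod (c₁ * c₂) →+* ZMod c₂ := ZMod.castHom (Dvd.intro_left c₁ rfl) (ZMod c₂) with hr₂
  have hfst : ∀ z : ZMod (c₁ * c₂), (crt z).1 = r₁ z := by
    intro z
    have : (RingHom.fst (ZMod c₁) (ZMod c₂)).comp (crt : ZMod (c₁*c₂) →+* ZMod c₁ × ZMod c₂) = r₁ :=
      RingHom.ext_zmod _ _
    exact congrArg (fun f => f z) this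
  have hsnd : ∀ z : ZMod (c₁ * c₂), (crt z).2 = r₂ z := by
    intro z
    have : (RingHom.snd (ZMod c₁) (ZMod c₂)).comp (crt : ZMod (c₁*c₂) →+* ZMod c₁ × ZMod c₂) = r₂ :=
      RingHom.ext_zmod _ _
    exact congrArg (fun f => f z) this
  -- pointwise identity
  have key : ∀ u : (ZMod (c₁*c₂))ˣ,
      eC (((a * (((u : ZMod (c₁*c₂))).val : ℤ) + b * ((((u⁻¹ : (ZMod (c₁*c₂))ˣ) : ZMod (c₁*c₂))).val : ℤ) : ℤ) : ℂ) / (c₁*c₂ : ℕ))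
      = eC ((((a * d₂^2) * ((((Φ u).1 : ZMod c₁)).val : ℤ) + b * (((((Φ u).1⁻¹ : (ZMod c₁)ˣ) : ZMod c₁)).val : ℤ) : ℤ) : ℂ) / c₁)
      * eC ((((a * d₁^2) * ((((Φ u).2 : ZMod c₂)).val : ℤ) + b * (((((Φ u).2⁻¹ : (ZMod c₂)ˣ) : ZMod c₂)).val : ℤ) : ℤ) : ℂ) / c₂) := by
    intro u
    set X : ℤ := (((u : ZMod (c₁*c₂))).val : ℤ)
    set Xb : ℤ := ((((u⁻¹ : (ZMod (c₁*c₂))ˣ) : ZMod (c₁*c₂))).val : ℤ)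
    set m : ℤ := a * X + b * Xb with hm
    have hcast : ((c₁ * c₂ : ℕ) : ℂ) = (c₁ : ℂ) * c₂ := by push_cast; ring
    rw [hcast, eC_split h₁.ne' h₂.ne' hco hd₂ hd₁ m]
    -- facts in ZMod c₁
    have hX1 : ((X : ℤ) : ZMod c₁) = r₁ (u : ZMod (c₁*c₂)) := by
      simp [X, ZMod.natCast_val, hr₁, ZMod.castHom_apply]
    have hXb1 : ((Xb : ℤ) : ZMod c₁) = r₁ ((u⁻¹ : (ZMod (c₁*c₂))ˣ) : ZMod (c₁*c₂)) := by
      simp [Xb, ZMod.natCast_val, hr₁, ZMod.castHom_apply]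
    have hX2 : ((X : ℤ) : ZMod c₂) = r₂ (u : ZMod (c₁*c₂)) := by
      simp [X, ZMod.natCast_val, hr₂, ZMod.castHom_apply]
    have hXb2 : ((Xb : ℤ) : ZMod c₂) = r₂ ((u⁻¹ : (ZMod (c₁*c₂))ˣ) : ZMod (c₁*c₂)) := by
      simp [Xb, ZMod.natCast_val, hr₂, ZMod.castHom_apply]
    have hmu1 : r₁ (u : ZMod (c₁*c₂)) * r₁ ((u⁻¹ : (ZMod (c₁*c₂))ˣ) : ZMod (c₁*c₂)) = 1 := by
      rw [← map_mul]; simp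
    have hmu2 : r₂ (u : ZMod (c₁*c₂)) * r₂ ((u⁻¹ : (ZMod (c₁*c₂))ˣ) : ZMod (c₁*c₂)) = 1 := by
      rw [← map_mul]; simp
    -- components of Φ u
    have hΦ1 : ((Φ u).1 : ZMod c₁) = (c₂ : ZMod c₁) * r₁ (u : ZMod (c₁*c₂)) := by
      show ((w₁ * (χ u).1 : (ZMod c₁)ˣ) : ZMod c₁) = _
      rw [Units.val_mul]
      congr 1
      show (crt (u : ZMod (c₁*c₂))).1 = _
      exact hfst _
    have hΦ2 : ((Φ u).2 : ZMod c₂) = (c₁ : ZMod c₂) * r₂ (u : ZMod (c₁*c₂)) := by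
      show ((w₂ * (χ u).2 : (ZMod c₂)ˣ) : ZMod c₂) = _
      rw [Units.val_mul]
      congr 1
      show (crt (u : ZMod (c₁*c₂))).2 = _
      exact hsnd _
    have hΦ1i : (((Φ u).1⁻¹ : (ZMod c₁)ˣ) : ZMod c₁)
        = ((d₂ : ℤ) : ZMod c₁) * r₁ ((u⁻¹ : (ZMod (c₁*c₂))ˣ) : ZMod (c₁*c₂)) := by
      show ((( w₁ * (χ u).1)⁻¹ : (ZMod c₁)ˣ) : ZMod c₁) = _
      rw [mul_inv, Units.val_mul]
      congr 1
      have : (χ u).1⁻¹ = (χ u⁻¹).1 := by rw [map_inv]; rfl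
      rw [this]
      show (crt ((u⁻¹ : (ZMod (c₁*c₂))ˣ) : ZMod (c₁*c₂))).1 = _
      exact hfst _
    have hΦ2i : (((Φ u).2⁻¹ : (ZMod c₂)ˣ) : ZMod c₂)
        = ((d₁ : ℤ) : ZMod c₂) * r₂ ((u⁻¹ : (ZMod (c₁*c₂))ˣ) : ZMod (c₁*c₂)) := by
      show ((( w₂ * (χ u).2)⁻¹ : (ZMod c₂)ˣ) : ZMod c₂) = _
      rw [mul_inv, Units.val_mul]
      congr 1
      have : (χ u).2⁻¹ = (χ u⁻¹).2 := by rw [map_inv]; rfl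
      rw [this]
      show (crt ((u⁻¹ : (ZMod (c₁*c₂))ˣ) : ZMod (c₁*c₂))).2 = _
      exact hsnd _
    congr 1
    · apply eC_div_congr h₁.ne'
      rw [← ZMod.intCast_eq_intCast_iff, hm]
      push_cast
      rw [hX1, hXb1]
      rw [show ((((Φ u).1 : ZMod c₁)).val : ZMod c₁) = ((Φ u).1 : ZMod c₁) from by
        simp [ZMod.natCast_val, ZMod.cast_id]]
      rw [show (((((Φ u).1⁻¹ : (ZMod c₁)ˣ) : ZMod c₁)).val : ZMod c₁) = (((Φ u).1⁻¹ : (ZMod c₁)ˣ) : ZMod c₁) from by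
        simp [ZMod.natCast_val, ZMod.cast_id]]
      rw [hΦ1, hΦ1i]
      linear_combination -((a : ZMod c₁) * ((d₂:ℤ) : ZMod c₁) * r₁ (u : ZMod (c₁*c₂))) * hu₁
    · apply eC_div_congr h₂.ne'
      rw [← ZMod.intCast_eq_intCast_iff, hm]
      push_cast
      rw [hX2, hXb2]
      rw [show ((((Φ u).2 : ZMod c₂)).val : ZMod c₂) = ((Φ u).2 : ZMod c₂) from by
        simp [ZMod.natCast_val, ZMod.cast_id]]
      rw [show (((((Φ u).2⁻¹ : (ZMod c₂)ˣ) : ZMod c₂)).val : ZMod c₂) = (((Φ u).2⁻¹ : (ZMod c₂)ˣ) : ZMod c₂) from by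
        simp [ZMod.natCast_val, ZMod.cast_id]]
      rw [hΦ2, hΦ2i]
      linear_combination -((a : ZMod c₂) * ((d₁:ℤ) : ZMod c₂) * r₂ (u : ZMod (c₁*c₂))) * hu₂
  -- assemble
  rw [Finset.sum_mul_sum]
  rw [show (∑ u : (ZMod (c₁*c₂))ˣ,
      eC (((a * (((u : ZMod (c₁*c₂))).val : ℤ) + b * ((((u⁻¹ : (ZMod (c₁*c₂))ˣ) : ZMod (c₁*c₂))).val : ℤ) : ℤ) : ℂ) / (c₁*c₂ : ℕ)))
      = ∑ u : (ZMod (c₁*c₂))ˣ, (fun p : (ZMod c₁)ˣ × (ZMod c₂)ˣ =>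
        eC ((((a * d₂^2) * (((p.1 : ZMod c₁)).val : ℤ) + b * ((((p.1⁻¹ : (ZMod c₁)ˣ) : ZMod c₁)).val : ℤ) : ℤ) : ℂ) / c₁)
      * eC ((((a * d₁^2) * (((p.2 : ZMod c₂)).val : ℤ) + b * ((((p.2⁻¹ : (ZMod c₂)ˣ) : ZMod c₂)).val : ℤ) : ℤ) : ℂ) / c₂)) (Φ u)
      from Finset.sum_congr rfl (fun u _ => key u)]
  exact (Equiv.sum_comp Φ (fun p : (ZMod c₁)ˣ × (ZMod c₂)ˣ =>
        eC ((((a * d₂^2) * (((p.1 : ZMod c₁)).val : ℤ) + b * ((((p.1⁻¹ : (ZMod c₁)ˣ) : ZMod c₁)).val : ℤ) : ℤ) : ℂ) / c₁)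
      * eC ((((a * d₁^2) * (((p.2 : ZMod c₂)).val : ℤ) + b * ((((p.2⁻¹ : (ZMod c₂)ˣ) : ZMod c₂)).val : ℤ) : ℤ) : ℂ) / c₂))).trans
    (Fintype.sum_prod_type _)
end
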